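/- arXiv:2209.12283 — 6 statements merged into one kernel-verified Lean document; each statement's English description precedes it below -/
import Mathlib

section
/- Let n ≥ 1, let P and Q be distinct points of the open unit ball Bⁿ = {x ∈ ℝⁿ : ‖x‖ < 1}, and let r ≥ 1 be a real number. Then ‖P/r − Q‖ = (r−1)/r holds if and only if d_F(P,Q) = ln r. -/
/-- The Funk distance on the open unit ball of Euclidean n-space:
`d_F(P,Q) = ln((√k − ⟨P, Q−P⟩)/(√k − ⟨Q, Q−P⟩))` with
`k = ⟨P, Q−P⟩² + (1 − ‖P‖²)‖Q−P‖²`. -/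
noncomputable def funkDist {n : ℕ} (P Q : EuclideanSpace ℝ (Fin n)) : ℝ :=
  Real.log
    ((Real.sqrt ((inner ℝ P (Q - P) : ℝ) ^ 2 + (1 - ‖P‖ ^ 2) * ‖Q - P‖ ^ 2) - (inner ℝ P (Q - P) : ℝ)) /
     (Real.sqrt ((inner ℝ P (Q - P) : ℝ) ^ 2 + (1 - ‖P‖ ^ 2) * ‖Q - P‖ ^ 2) - (inner ℝ Q (Q - P) : ℝ)))

/-- `ρ(ε,η) = (1 + sgn(ε−η)·ε)/(1 + sgn(ε−η)·η)`. -/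
noncomputable def rho (ε η : ℝ) : ℝ :=
  (1 + Real.sign (ε - η) * ε) / (1 + Real.sign (ε - η) * η)

/-- The point `(a,b)` of the Euclidean plane. -/
def pt (a b : ℝ) : EuclideanSpace ℝ (Fin 2) := WithLp.toLp 2 ![a, b]

/-!
Write `a = ⟪P, Q - P⟫`, `b = ⟪Q, Q - P⟫` and `k` for the radicand of `d_F`, so that
`d_F(P, Q) = ln ((√k - a) / (√k - b))`. Expanding inner products gives
`‖Q - P‖² (‖P - r Q‖² - (r - 1)²) = (r b - a)² - (r - 1)² k`, which factors as
`-(r (√k - b) - (√k - a)) (r (√k + b) - (√k + a))`. As also `k = b² + (1 - ‖Q‖²) ‖Q - P‖²`,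
we have `√k > |a|, |b|`; together with `b - a = ‖Q - P‖² > 0` this makes the second factor
positive for `r ≥ 1`, so `‖P - r Q‖ = r - 1` exactly when the first factor vanishes, i.e. when
the Funk ratio `(√k - a) / (√k - b)` equals `r`.
-/

open scoped InnerProductSpace

lemma Real.abs_lt_sqrt_sq_add {x y : ℝ} (hy : 0 < y) : |x| < √(x ^ 2 + y) :=
  abs_lt_of_sq_lt_sq (by rw [Real.sq_sqrt (by positivity)]; linarith) (Real.sqrt_nonneg _)

lemma sq_norm_sub_pos {G : Type*} [NormedAddCommGroup G] {P Q : G} (hPQ : P ≠ Q) :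
    0 < ‖Q - P‖ ^ 2 :=
  pow_pos (norm_pos_iff.2 (sub_ne_zero.2 hPQ.symm)) 2

lemma one_sub_sq_norm_mul_pos {G : Type*} [NormedAddCommGroup G] {P Q X : G} (hX : ‖X‖ < 1)
    (hPQ : P ≠ Q) : 0 < (1 - ‖X‖ ^ 2) * ‖Q - P‖ ^ 2 :=
  mul_pos (by nlinarith [norm_nonneg X]) (sq_norm_sub_pos hPQ)

namespace Funk

variable {E : Type*} [NormedAddCommGroup E] [InnerProductSpace ℝ E] {P Q : E}

/-- The radicand `k` of the Funk distance. -/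
noncomputable def disc (P Q : E) : ℝ := ⟪P, Q - P⟫_ℝ ^ 2 + (1 - ‖P‖ ^ 2) * ‖Q - P‖ ^ 2

noncomputable def ratio (P Q : E) : ℝ :=
  (√(disc P Q) - ⟪P, Q - P⟫_ℝ) / (√(disc P Q) - ⟪Q, Q - P⟫_ℝ)

lemma _root_.funkDist_eq_log_ratio {n : ℕ} (P Q : EuclideanSpace ℝ (Fin n)) :
    funkDist P Q = Real.log (ratio P Q) :=
  rfl

lemma inner_sub_inner_eq_norm_sq (P Q : E) :
    ⟪Q, Q - P⟫_ℝ - ⟪P, Q - P⟫_ℝ = ‖Q - P‖ ^ 2 := by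
  rw [← inner_sub_left, real_inner_self_eq_norm_sq]

lemma disc_eq_right (P Q : E) :
    disc P Q = ⟪Q, Q - P⟫_ℝ ^ 2 + (1 - ‖Q‖ ^ 2) * ‖Q - P‖ ^ 2 := by
  have hb := inner_sub_inner_eq_norm_sq P Q
  have hQ : ‖Q‖ ^ 2 = ‖P‖ ^ 2 + 2 * ⟪P, Q - P⟫_ℝ + ‖Q - P‖ ^ 2 := by
    rw [← real_inner_self_eq_norm_sq, ← real_inner_self_eq_norm_sq,
      ← real_inner_self_eq_norm_sq (Q - P)]
    simp only [inner_sub_left, inner_sub_right, real_inner_comm P Q]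
    ring
  rw [disc, hQ, ← hb]
  ring

lemma abs_inner_left_lt_sqrt_disc (hP : ‖P‖ < 1) (hPQ : P ≠ Q) :
    |⟪P, Q - P⟫_ℝ| < √(disc P Q) :=
  Real.abs_lt_sqrt_sq_add (one_sub_sq_norm_mul_pos hP hPQ)

lemma abs_inner_right_lt_sqrt_disc (hQ : ‖Q‖ < 1) (hPQ : P ≠ Q) :
    |⟪Q, Q - P⟫_ℝ| < √(disc P Q) := by
  rw [disc_eq_right]
  exact Real.abs_lt_sqrt_sq_add (one_sub_sq_norm_mul_pos hQ hPQ)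

lemma ratio_pos (hP : ‖P‖ < 1) (hQ : ‖Q‖ < 1) (hPQ : P ≠ Q) : 0 < ratio P Q :=
  div_pos (sub_pos.2 (lt_of_abs_lt (abs_inner_left_lt_sqrt_disc hP hPQ)))
    (sub_pos.2 (lt_of_abs_lt (abs_inner_right_lt_sqrt_disc hQ hPQ)))

lemma sq_norm_sub_mul_eq (P Q : E) (r : ℝ) :
    ‖Q - P‖ ^ 2 * (‖P - r • Q‖ ^ 2 - (r - 1) ^ 2) =
      (r * ⟪Q, Q - P⟫_ℝ - ⟪P, Q - P⟫_ℝ) ^ 2 - (r - 1) ^ 2 * disc P Q := by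
  simp only [disc, ← real_inner_self_eq_norm_sq, inner_sub_left, inner_sub_right,
    inner_smul_left, inner_smul_right, real_inner_comm P Q, RCLike.conj_to_real]
  ring

theorem ratio_eq_iff_norm_sub_smul_eq (hP : ‖P‖ < 1) (hQ : ‖Q‖ < 1) (hPQ : P ≠ Q) {r : ℝ}
    (hr : 1 ≤ r) : ratio P Q = r ↔ ‖P - r • Q‖ = r - 1 := by
  set a := ⟪P, Q - P⟫_ℝ
  set b := ⟪Q, Q - P⟫_ℝ
  set s := √(disc P Q)
  have hb : |b| < s := abs_inner_right_lt_sqrt_disc hQ hPQ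
  have hv := sq_norm_sub_pos hPQ
  have hs : s ^ 2 = disc P Q :=
    Real.sq_sqrt (by have := one_sub_sq_norm_mul_pos hP hPQ; unfold disc; positivity)
  have hfactor : ‖Q - P‖ ^ 2 * (‖P - r • Q‖ ^ 2 - (r - 1) ^ 2) =
      -((r * (s - b) - (s - a)) * (r * (s + b) - (s + a))) := by
    rw [sq_norm_sub_mul_eq, ← hs]
    ring
  have hpos : 0 < r * (s + b) - (s + a) := by
    have hba : b - a = ‖Q - P‖ ^ 2 := inner_sub_inner_eq_norm_sq P Q
    nlinarith [neg_abs_le b]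
  calc ratio P Q = r ↔ s - a = r * (s - b) :=
        div_eq_iff (sub_pos.2 (lt_of_abs_lt hb)).ne'
    _ ↔ ‖P - r • Q‖ ^ 2 - (r - 1) ^ 2 = 0 := by
        rw [← mul_eq_zero_iff_left hv.ne', hfactor, neg_eq_zero,
          mul_eq_zero_iff_right hpos.ne', sub_eq_zero, eq_comm]
    _ ↔ ‖P - r • Q‖ = r - 1 := by
        rw [sub_eq_zero, sq_eq_sq₀ (norm_nonneg _) (sub_nonneg.2 hr)]

end Funk

theorem funk_parabola_stmt1_general (n : ℕ) (P Q : EuclideanSpace ℝ (Fin n))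
    (hP : ‖P‖ < 1) (hQ : ‖Q‖ < 1) (hPQ : P ≠ Q) (r : ℝ) (hr : 1 ≤ r) :
    ‖(1 / r) • P - Q‖ = (r - 1) / r ↔ funkDist P Q = Real.log r := by
  have hr0 : 0 < r := by linarith
  have hscale : (1 / r) • P - Q = (1 / r) • (P - r • Q) := by
    rw [smul_sub, smul_smul, one_div_mul_cancel hr0.ne', one_smul]
  rw [hscale, norm_smul, Real.norm_of_nonneg (by positivity), one_div_mul_eq_div,
    div_left_inj' hr0.ne', funkDist_eq_log_ratio,
    Real.log_injOn_pos.eq_iff (Funk.ratio_pos hP hQ hPQ) hr0,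
    Funk.ratio_eq_iff_norm_sub_smul_eq hP hQ hPQ hr]

/-- For `n ≥ 1` and distinct points `P, Q` of the open unit ball of `ℝⁿ` and `r ≥ 1`,
`‖P/r − Q‖ = (r−1)/r` iff `d_F(P,Q) = ln r`. -/
theorem funk_parabola_stmt1 (n : ℕ) (hn : 1 ≤ n) (P Q : EuclideanSpace ℝ (Fin n))
    (hP : ‖P‖ < 1) (hQ : ‖Q‖ < 1) (hPQ : P ≠ Q) (r : ℝ) (hr : 1 ≤ r) :
    ‖(1 / r) • P - Q‖ = (r - 1) / r ↔ funkDist P Q = Real.log r :=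
  funk_parabola_stmt1_general n P Q hP hQ hPQ r hr
end

section
/- Let P = (a,b) ∈ B² and let c ∈ (−1,1) with b ≠ c, and let s be the horizontal line y = c. Then the point Q* = (a/ρ(b,c), c) lies in B², satisfies d_F(P, Q*) = ln ρ(b,c), and for every t ∈ ℝ with (t,c) ∈ B² one has d_F(P, (t,c)) ≥ ln ρ(b,c). In other words, the Funk distance from the point P to the line s is attained at Q* and equals ln ρ(b,c). -/
/-! If the ray from `P` through `Q` leaves the disk at `X = P + σ (Q - P)`, then `σ > 1` and
`d_F(P, Q) = log (σ / (σ - 1)) = log (|PX| / |QX|)`. When `Q = (t, c)` and `ε = sgn(b - c)`, this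
ratio is `(ε b - ε X₂) / (ε c - ε X₂)`, which increases with `ε X₂`; since `ε X₂ ≥ -1` it is at least
`(1 + ε b) / (1 + ε c) = ρ(b, c)`, with equality when `X = (0, -ε)`. The ray from `P` towards
`(0, -ε)` crosses the line `y = c` at `Q*`. -/

theorem norm_lt_one_of_eq_add_smul_sub {E : Type*} [SeminormedAddCommGroup E] [NormedSpace ℝ E]
    {P Q X : E} {σ : ℝ} (hP : ‖P‖ < 1) (hX : ‖X‖ ≤ 1) (hσ : 1 < σ)
    (hPX : X = P + σ • (Q - P)) : ‖Q‖ < 1 := by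
  have hQ : Q = (1 - σ⁻¹) • P + σ⁻¹ • X := by
    rw [hPX, smul_add, smul_smul, inv_mul_cancel₀ (by positivity), one_smul]
    module
  have hinv : σ⁻¹ < 1 := inv_lt_one_of_one_lt₀ hσ
  have hinv₀ : 0 < σ⁻¹ := by positivity
  calc ‖Q‖ ≤ (1 - σ⁻¹) * ‖P‖ + σ⁻¹ * ‖X‖ := by
        rw [hQ]
        refine (norm_add_le _ _).trans_eq ?_
        rw [norm_smul, norm_smul, Real.norm_of_nonneg (by linarith), Real.norm_of_nonneg hinv₀.le]
    _ < 1 := by nlinarith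

theorem exists_one_lt_norm_add_smul_sub_eq_one {E : Type*} [NormedAddCommGroup E]
    [NormedSpace ℝ E] {P Q : E} (hQ : ‖Q‖ < 1) (hPQ : P ≠ Q) :
    ∃ σ : ℝ, 1 < σ ∧ ‖P + σ • (Q - P)‖ = 1 := by
  have hd : 0 < ‖Q - P‖ := norm_pos_iff.2 (sub_ne_zero.2 hPQ.symm)
  set σ₁ := 1 + (1 + ‖P‖) / ‖Q - P‖
  have hσ₁ : 1 ≤ σ₁ := le_add_of_nonneg_right (by positivity)
  have hfar : 1 ≤ ‖P + σ₁ • (Q - P)‖ := by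
    have h := norm_sub_norm_le (σ₁ • (Q - P)) (-P)
    rw [sub_neg_eq_add, add_comm, norm_neg, norm_smul, Real.norm_of_nonneg (by linarith)] at h
    have : σ₁ * ‖Q - P‖ = ‖Q - P‖ + 1 + ‖P‖ := by simp only [σ₁]; field_simp; ring
    linarith
  have hcont : ContinuousOn (fun σ : ℝ => ‖P + σ • (Q - P)‖) (Set.Icc 1 σ₁) := by fun_prop
  obtain ⟨σ, ⟨hσ1, -⟩, hσ⟩ := intermediate_value_Icc hσ₁ hcont ⟨by simpa using hQ.le, hfar⟩
  refine ⟨σ, lt_of_le_of_ne hσ1 ?_, hσ⟩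
  rintro rfl
  simp only [one_smul, add_sub_cancel] at hσ
  linarith

theorem funkDist_eq_log_of_norm_add_smul_sub_eq_one {n : ℕ} {P Q : EuclideanSpace ℝ (Fin n)}
    (hP : ‖P‖ < 1) (hPQ : P ≠ Q) {σ : ℝ} (hσ : 0 < σ) (hX : ‖P + σ • (Q - P)‖ = 1) :
    funkDist P Q = Real.log (σ / (σ - 1)) := by
  rw [funkDist]
  set U := (inner ℝ P (Q - P) : ℝ)
  set S := ‖Q - P‖ ^ 2
  have hS : 0 < S := by have := norm_pos_iff.2 (sub_ne_zero.2 hPQ.symm); positivity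
  have hQ : (inner ℝ Q (Q - P) : ℝ) = U + S := by
    rw [show S = inner ℝ (Q - P) (Q - P) from (real_inner_self_eq_norm_sq _).symm,
      ← inner_add_left, add_sub_cancel]
  have hquad : S * σ ^ 2 + 2 * U * σ + ‖P‖ ^ 2 = 1 := by
    have h := congrArg (· ^ 2) hX
    simp only [norm_add_sq_real, norm_smul, inner_smul_right, mul_pow, Real.norm_eq_abs, sq_abs,
      one_pow] at h
    linarith
  -- `σ` is the positive root of `S x² + 2 U x + ‖P‖² - 1`, so `S σ + U = √k`.
  have hroot : Real.sqrt (U ^ 2 + (1 - ‖P‖ ^ 2) * S) = S * σ + U := by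
    have hP2 : ‖P‖ ^ 2 < 1 := by nlinarith [norm_nonneg P]
    rw [Real.sqrt_eq_iff_mul_self_eq_of_pos (by nlinarith [mul_pos hS hσ])]
    linear_combination S * hquad
  rw [hQ, hroot, add_sub_cancel_right, show S * σ + U - (U + S) = S * (σ - 1) by ring,
    mul_div_mul_left _ _ hS.ne']

theorem pt_add (a b x y : ℝ) : pt a b + pt x y = pt (a + x) (b + y) := by
  ext i; fin_cases i <;> simp [pt]

theorem pt_sub (a b x y : ℝ) : pt a b - pt x y = pt (a - x) (b - y) := by
  ext i; fin_cases i <;> simp [pt]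

theorem smul_pt (r a b : ℝ) : r • pt a b = pt (r * a) (r * b) := by
  ext i; fin_cases i <;> simp [pt]

theorem norm_pt_sq (a b : ℝ) : ‖pt a b‖ ^ 2 = a ^ 2 + b ^ 2 := by
  rw [EuclideanSpace.norm_eq, Real.sq_sqrt (by positivity)]
  simp [pt, Fin.sum_univ_two]

theorem abs_le_norm_pt (a b : ℝ) : |b| ≤ ‖pt a b‖ :=
  abs_le_of_sq_le_sq (by rw [norm_pt_sq]; nlinarith [sq_nonneg a]) (norm_nonneg _)

theorem norm_pt_zero_of_abs_eq_one {y : ℝ} (hy : |y| = 1) : ‖pt 0 y‖ = 1 := by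
  rw [← pow_eq_one_iff_of_nonneg (norm_nonneg _) two_ne_zero, norm_pt_sq, ← sq_abs y, hy]
  norm_num

theorem pt_ne_pt_of_ne {a b t c : ℝ} (hbc : b ≠ c) : pt a b ≠ pt t c := by
  intro h
  exact hbc (by simpa [pt] using congrArg (· 1) h)

theorem log_div_le_funkDist_pt {a b c ε t : ℝ} (hε : |ε| = 1) (hbc : 0 < ε * (b - c))
    (hc : 0 < 1 + ε * c) (hP : ‖pt a b‖ < 1) (hQ : ‖pt t c‖ < 1) :
    Real.log ((1 + ε * b) / (1 + ε * c)) ≤ funkDist (pt a b) (pt t c) := by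
  have hPQ : pt a b ≠ pt t c := pt_ne_pt_of_ne (by rintro rfl; simp at hbc)
  obtain ⟨σ, hσ, hX⟩ := exists_one_lt_norm_add_smul_sub_eq_one hQ hPQ
  rw [funkDist_eq_log_of_norm_add_smul_sub_eq_one hP hPQ (by linarith) hX]
  rw [pt_sub, smul_pt, pt_add] at hX
  have hexit : -1 ≤ ε * (b + σ * (c - b)) := by
    have hy : |ε * (b + σ * (c - b))| ≤ 1 := by
      rw [abs_mul, hε, one_mul, ← hX]; exact abs_le_norm_pt _ _
    exact (abs_le.1 hy).1
  apply Real.log_le_log (div_pos (by linarith) hc)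
  rw [div_le_div_iff₀ hc (by linarith)]
  linear_combination hexit

theorem pt_zero_neg_eq_add_smul_sub {a b c ε : ℝ} (hε : |ε| = 1) (hbc : 0 < ε * (b - c))
    (hc : 0 < 1 + ε * c) :
    pt 0 (-ε) = pt a b + ((1 + ε * b) / (ε * (b - c))) •
      (pt (a / ((1 + ε * b) / (1 + ε * c))) c - pt a b) := by
  have hε₀ : ε ≠ 0 := by rintro rfl; simp at hε
  have hb : 1 + ε * b ≠ 0 := by linarith
  have hbc' : b - c ≠ 0 := by rintro h; simp [h] at hbc
  have hc' : 1 + ε * c ≠ 0 := hc.ne'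
  have hε₂ : ε ^ 2 = 1 := by rw [← sq_abs, hε, one_pow]
  rw [pt_sub, smul_pt, pt_add]
  congr 1
  · field_simp
    ring
  · field_simp
    linear_combination (c - b) * hε₂

theorem norm_pt_div_lt_one {a b c ε : ℝ} (hε : |ε| = 1) (hbc : 0 < ε * (b - c))
    (hc : 0 < 1 + ε * c) (hP : ‖pt a b‖ < 1) :
    ‖pt (a / ((1 + ε * b) / (1 + ε * c))) c‖ < 1 :=
  norm_lt_one_of_eq_add_smul_sub hP (norm_pt_zero_of_abs_eq_one (by rwa [abs_neg])).le
    (by rw [one_lt_div hbc]; linarith) (pt_zero_neg_eq_add_smul_sub hε hbc hc)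

theorem funkDist_pt_div_eq_log {a b c ε : ℝ} (hε : |ε| = 1) (hbc : 0 < ε * (b - c))
    (hc : 0 < 1 + ε * c) (hP : ‖pt a b‖ < 1) :
    funkDist (pt a b) (pt (a / ((1 + ε * b) / (1 + ε * c))) c) =
      Real.log ((1 + ε * b) / (1 + ε * c)) := by
  have hX := pt_zero_neg_eq_add_smul_sub (a := a) hε hbc hc
  have hXn := hX ▸ norm_pt_zero_of_abs_eq_one (by rwa [abs_neg])
  rw [funkDist_eq_log_of_norm_add_smul_sub_eq_one hP (pt_ne_pt_of_ne (by rintro rfl; simp at hbc))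
    (div_pos (by linarith) hbc) hXn]
  have hσ : (1 + ε * b) / (ε * (b - c)) - 1 = (1 + ε * c) / (ε * (b - c)) := by
    rw [div_sub_one hbc.ne']
    ring
  rw [hσ, div_div_div_cancel_right₀ hbc.ne']

/-- The Funk distance from a point `P = (a,b)` of the disk to the horizontal line `y = c`
is attained at `Q* = (a/ρ(b,c), c)` and equals `ln ρ(b,c)`. -/
theorem funk_parabola_stmt3 (a b c : ℝ) (hP : ‖pt a b‖ < 1)
    (hc : -1 < c ∧ c < 1) (hbc : b ≠ c) :
    ‖pt (a / rho b c) c‖ < 1 ∧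
    funkDist (pt a b) (pt (a / rho b c) c) = Real.log (rho b c) ∧
    ∀ t : ℝ, ‖pt t c‖ < 1 → Real.log (rho b c) ≤ funkDist (pt a b) (pt t c) := by
  unfold rho
  set ε := Real.sign (b - c)
  have hε : |ε| = 1 := by
    rcases Real.sign_apply_eq_of_ne_zero _ (sub_ne_zero.2 hbc) with h | h <;> simp [ε, h]
  have hεbc : 0 < ε * (b - c) := Real.sign_mul_pos_of_ne_zero _ (sub_ne_zero.2 hbc)
  have hεc : 0 < 1 + ε * c := by
    have : |ε * c| < 1 := by rw [abs_mul, hε, one_mul, abs_lt]; exact hc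
    linarith [(abs_lt.1 this).1]
  exact ⟨norm_pt_div_lt_one hε hεbc hεc hP, funkDist_pt_div_eq_log hε hεbc hεc hP,
    fun t ht => log_div_le_funkDist_pt hε hεbc hεc hP ht⟩
end

section
/- Let F = (f₀,g₀) ∈ B², let y₀ ∈ (−1,1) with g₀ ≠ y₀, and let P = (x,y) ∈ B² be a point lying strictly on the opposite side of the line s: y = y₀ from F, i.e. (y₀ − g₀)(y₀ − y) < 0. Then the Funk distance from the line s to P is strictly smaller than the Funk distance from F to P: ln ρ(y₀,y) < d_F(F,P). Consequently, every point of the Funk parabola of type 1 (the set of P ∈ B² with d_F(F,P) = ln ρ(y₀,y)) lies weakly on the same side of s as the focus F. -/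
/-! The Funk distance from `F` to `P` is `log (t / (t - 1))`, where `F + t • (P - F)` is the point at
which the ray from `F` through `P` leaves the disk. Any unit vector `u` gives a supporting half-plane
`⟪·, u⟫ < 1` of the disk, and since the exit point lies in it, `t / (t - 1)` is at least the
corresponding ratio `(1 - ⟪F, u⟫) / (1 - ⟪P, u⟫)` for the half-plane. For `u = (0, ±1)` this ratio
exceeds `ρ(y₀, y)` exactly when `F` and `P` lie strictly on opposite sides of the directrix. -/

open Real
open scoped RealInnerProductSpace

namespace Funk

section InnerProductSpace

variable {E : Type*} [NormedAddCommGroup E] [InnerProductSpace ℝ E]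

lemma inner_lt_one {P u : E} (hP : ‖P‖ < 1) (hu : ‖u‖ ≤ 1) : ⟪P, u⟫ < 1 :=
  (real_inner_le_norm P u).trans_lt <|
    (mul_le_of_le_one_right (norm_nonneg P) hu).trans_lt hP

noncomputable def exitTime (P v : E) : ℝ :=
  (√(⟪P, v⟫ ^ 2 + (1 - ‖P‖ ^ 2) * ‖v‖ ^ 2) - ⟪P, v⟫) / ‖v‖ ^ 2

lemma norm_add_exitTime_smul {P v : E} (hP : ‖P‖ ≤ 1) (hv : v ≠ 0) :
    ‖P + exitTime P v • v‖ = 1 := by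
  have hv0 : ‖v‖ ≠ 0 := norm_ne_zero_iff.2 hv
  have hk : 0 ≤ ⟪P, v⟫ ^ 2 + (1 - ‖P‖ ^ 2) * ‖v‖ ^ 2 := by
    have : ‖P‖ ^ 2 ≤ 1 := pow_le_one₀ (norm_nonneg P) hP
    nlinarith [sq_nonneg ⟪P, v⟫]
  have hs := Real.sq_sqrt hk
  refine (sq_eq_sq₀ (norm_nonneg _) zero_le_one).1 ?_
  rw [norm_add_sq_real, real_inner_smul_right, norm_smul, mul_pow, Real.norm_eq_abs, sq_abs,
    exitTime]
  field_simp
  linear_combination hs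

lemma one_lt_exitTime {P Q : E} (hQ : ‖Q‖ < 1) (hPQ : P ≠ Q) : 1 < exitTime P (Q - P) := by
  have hV : 0 < ‖Q - P‖ ^ 2 := pow_pos (norm_pos_iff.2 (sub_ne_zero.2 hPQ.symm)) 2
  have hQsq : ‖Q‖ ^ 2 = ‖P‖ ^ 2 + 2 * ⟪P, Q - P⟫ + ‖Q - P‖ ^ 2 := by
    simpa using norm_add_sq_real P (Q - P)
  have hQ2 : ‖Q‖ ^ 2 < 1 := pow_lt_one₀ (norm_nonneg Q) hQ two_ne_zero
  rw [exitTime, one_lt_div hV, lt_sub_iff_add_lt']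
  -- the radicand is `(⟪P, Q - P⟫ + ‖Q - P‖²)² + ‖Q - P‖² (1 - ‖Q‖²)`
  exact Real.lt_sqrt_of_sq_lt (by nlinarith)

end InnerProductSpace

variable {n : ℕ} {P Q u : EuclideanSpace ℝ (Fin n)}

lemma funkDist_eq_log_exitTime (hPQ : P ≠ Q) :
    funkDist P Q = log (exitTime P (Q - P) / (exitTime P (Q - P) - 1)) := by
  have hV : ‖Q - P‖ ^ 2 ≠ 0 := pow_ne_zero 2 (norm_ne_zero_iff.2 (sub_ne_zero.2 hPQ.symm))
  have hQ : ⟪Q, Q - P⟫ = ⟪P, Q - P⟫ + ‖Q - P‖ ^ 2 := by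
    rw [← real_inner_self_eq_norm_sq, ← inner_add_left, add_sub_cancel]
  rw [funkDist, exitTime, div_sub_one hV, div_div_div_cancel_right₀ hV, hQ, sub_sub]

/-- The Funk distance of the ball dominates that of each supporting half-space `⟪·, u⟫ < 1`. -/
lemma log_div_le_funkDist (hP : ‖P‖ < 1) (hQ : ‖Q‖ < 1) (hu : ‖u‖ ≤ 1) :
    log ((1 - ⟪P, u⟫) / (1 - ⟪Q, u⟫)) ≤ funkDist P Q := by
  have hp := inner_lt_one hP hu
  have hq := inner_lt_one hQ hu
  rcases eq_or_ne P Q with rfl | hPQ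
  · simp [funkDist, div_self (sub_ne_zero.2 hp.ne')]
  set t := exitTime P (Q - P)
  have ht := one_lt_exitTime hQ hPQ
  have hexit : ⟪P + t • (Q - P), u⟫ ≤ 1 := by
    refine (real_inner_le_norm _ _).trans ?_
    rw [norm_add_exitTime_smul hP.le (sub_ne_zero.2 hPQ.symm), one_mul]
    exact hu
  rw [inner_add_left, real_inner_smul_left, inner_sub_left] at hexit
  rw [funkDist_eq_log_exitTime hPQ]
  refine log_le_log (div_pos (by linarith) (by linarith)) ?_
  rw [div_le_div_iff₀ (by linarith) (by linarith)]
  linear_combination hexit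

lemma log_div_lt_funkDist (hP : ‖P‖ < 1) (hQ : ‖Q‖ < 1) (hu : ‖u‖ ≤ 1) {c : ℝ}
    (hPc : ⟪P, u⟫ < c) (hcQ : c < ⟪Q, u⟫) :
    log ((1 - c) / (1 - ⟪Q, u⟫)) < funkDist P Q := by
  have hq := inner_lt_one hQ hu
  calc log ((1 - c) / (1 - ⟪Q, u⟫))
      < log ((1 - ⟪P, u⟫) / (1 - ⟪Q, u⟫)) :=
        log_lt_log (div_pos (by linarith) (by linarith))
          (div_lt_div_of_pos_right (by linarith) (by linarith))
    _ ≤ funkDist P Q := log_div_le_funkDist hP hQ hu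

end Funk

lemma inner_pt (a b c d : ℝ) : ⟪pt a b, pt c d⟫ = a * c + b * d := by
  simp [pt, PiLp.inner_apply, Fin.sum_univ_two, mul_comm]

lemma norm_pt (a b : ℝ) : ‖pt a b‖ = √(a ^ 2 + b ^ 2) := by
  simp [pt, EuclideanSpace.norm_eq, Fin.sum_univ_two]

lemma rho_of_lt {ε η : ℝ} (h : ε < η) : rho ε η = (1 - ε) / (1 - η) := by
  rw [rho, Real.sign_of_neg (sub_neg.2 h)]
  ring_nf

lemma rho_of_gt {ε η : ℝ} (h : η < ε) : rho ε η = (1 + ε) / (1 + η) := by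
  rw [rho, Real.sign_of_pos (sub_pos.2 h)]
  ring_nf

open Funk in
theorem funk_parabola_stmt5_general (f₀ g₀ y₀ : ℝ) (hF : ‖pt f₀ g₀‖ < 1) :
    (∀ x y : ℝ, ‖pt x y‖ < 1 → (y₀ - g₀) * (y₀ - y) < 0 →
      Real.log (rho y₀ y) < funkDist (pt f₀ g₀) (pt x y)) ∧
    (∀ x y : ℝ, ‖pt x y‖ < 1 → funkDist (pt f₀ g₀) (pt x y) = Real.log (rho y₀ y) →
      0 ≤ (y₀ - g₀) * (y₀ - y)) := by
  have directrix_lt : ∀ x y : ℝ, ‖pt x y‖ < 1 → (y₀ - g₀) * (y₀ - y) < 0 →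
      Real.log (rho y₀ y) < funkDist (pt f₀ g₀) (pt x y) := by
    intro x y hP hopp
    rcases mul_neg_iff.mp hopp with ⟨hg, hy⟩ | ⟨hg, hy⟩
    · rw [rho_of_lt (by linarith)]
      simpa [inner_pt] using log_div_lt_funkDist hF hP (u := pt 0 1) (c := y₀)
        (by simp [norm_pt]) (by simp [inner_pt]; linarith) (by simp [inner_pt]; linarith)
    · rw [rho_of_gt (by linarith)]
      simpa [inner_pt] using log_div_lt_funkDist hF hP (u := pt 0 (-1)) (c := -y₀)
        (by simp [norm_pt]) (by simp [inner_pt]; linarith) (by simp [inner_pt]; linarith)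
  exact ⟨directrix_lt, fun x y hP heq =>
    not_lt.1 fun hopp => (directrix_lt x y hP hopp).ne' heq⟩

/-- If `P` lies strictly on the opposite side of the directrix `y = y₀` from the focus `F`,
then `d_F(s,P) = ln ρ(y₀,y) < d_F(F,P)`; consequently every point of the type-1 Funk
parabola lies weakly on the same side of the directrix as the focus. -/
theorem funk_parabola_stmt5 (f₀ g₀ y₀ : ℝ) (hF : ‖pt f₀ g₀‖ < 1)
    (hy₀ : -1 < y₀ ∧ y₀ < 1) (hgy : g₀ ≠ y₀) :
    (∀ x y : ℝ, ‖pt x y‖ < 1 → (y₀ - g₀) * (y₀ - y) < 0 →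
      Real.log (rho y₀ y) < funkDist (pt f₀ g₀) (pt x y)) ∧
    (∀ x y : ℝ, ‖pt x y‖ < 1 → funkDist (pt f₀ g₀) (pt x y) = Real.log (rho y₀ y) →
      0 ≤ (y₀ - g₀) * (y₀ - y)) :=
  funk_parabola_stmt5_general f₀ g₀ y₀ hF
end

section
/- Let y₀ ∈ (−1,1) and F = (f₀,g₀) ∈ B² with g₀ ≠ y₀, and set σ₁ = 1 + sgn(y₀−g₀)·y₀, B = −2f₀/σ₁, C = (f₀² + (y₀−g₀)² + 2|y₀−g₀|)/σ₁². Then the discriminant of the type-1 Funk parabola equation satisfies B² − 4C = −(4/σ₁²)·((y₀−g₀)² + 2|y₀−g₀|) < 0, so the equation x² + B·x·ȳ + C·ȳ² + E·ȳ = 0 is of elliptic type in Euclidean geometry. -/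
/-! The quadratic form `x² + B·x·ȳ + C·ȳ²` has `C = (B/2)² + D/σ²`, so its discriminant is
`−4D/σ²`, negative because the normalising factor `σ = 1 ± y₀` is positive inside the disk
and `D = d² + 2|d|` is positive for `d = y₀ − g₀ ≠ 0`. -/

theorem one_add_sign_mul_pos (s : ℝ) {y : ℝ} (hy₁ : -1 < y) (hy₂ : y < 1) :
    0 < 1 + Real.sign s * y := by
  rcases Real.sign_apply_eq s with h | h | h <;> rw [h] <;> linarith

theorem neg_two_mul_div_sq_sub_four_mul (f σ D : ℝ) :
    (-2 * f / σ) ^ 2 - 4 * ((f ^ 2 + D) / σ ^ 2) = -(4 / σ ^ 2) * D := by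
  ring

theorem sq_add_two_mul_abs_pos {d : ℝ} (hd : d ≠ 0) : 0 < d ^ 2 + 2 * |d| := by
  have := abs_pos.mpr hd
  positivity

theorem neg_four_div_sq_mul_neg {σ D : ℝ} (hσ : σ ≠ 0) (hD : 0 < D) : -(4 / σ ^ 2) * D < 0 :=
  mul_neg_of_neg_of_pos (neg_neg_of_pos (by positivity)) hD

theorem funk_parabola_stmt8_general (y₀ f₀ g₀ σ₁ B C : ℝ)
    (hy₀ : -1 < y₀ ∧ y₀ < 1) (hgy : g₀ ≠ y₀)
    (hσ : σ₁ = 1 + Real.sign (y₀ - g₀) * y₀)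
    (hB : B = -2 * f₀ / σ₁)
    (hC : C = (f₀ ^ 2 + (y₀ - g₀) ^ 2 + 2 * |y₀ - g₀|) / σ₁ ^ 2) :
    B ^ 2 - 4 * C = -(4 / σ₁ ^ 2) * ((y₀ - g₀) ^ 2 + 2 * |y₀ - g₀|) ∧
    B ^ 2 - 4 * C < 0 := by
  have hσ₁ : σ₁ ≠ 0 := hσ ▸ (one_add_sign_mul_pos (y₀ - g₀) hy₀.1 hy₀.2).ne'
  have hdisc : B ^ 2 - 4 * C = -(4 / σ₁ ^ 2) * ((y₀ - g₀) ^ 2 + 2 * |y₀ - g₀|) := by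
    rw [hB, hC, add_assoc, neg_two_mul_div_sq_sub_four_mul]
  refine ⟨hdisc, hdisc ▸ neg_four_div_sq_mul_neg hσ₁ ?_⟩
  exact sq_add_two_mul_abs_pos (sub_ne_zero.mpr hgy.symm)

/-- The discriminant of the type-1 Funk parabola equation:
`B² − 4C = −(4/σ₁²)·((y₀−g₀)² + 2|y₀−g₀|) < 0`, so the equation is of elliptic type. -/
theorem funk_parabola_stmt8 (y₀ f₀ g₀ σ₁ B C : ℝ)
    (hy₀ : -1 < y₀ ∧ y₀ < 1) (hF : ‖pt f₀ g₀‖ < 1) (hgy : g₀ ≠ y₀)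
    (hσ : σ₁ = 1 + Real.sign (y₀ - g₀) * y₀)
    (hB : B = -2 * f₀ / σ₁)
    (hC : C = (f₀ ^ 2 + (y₀ - g₀) ^ 2 + 2 * |y₀ - g₀|) / σ₁ ^ 2) :
    B ^ 2 - 4 * C = -(4 / σ₁ ^ 2) * ((y₀ - g₀) ^ 2 + 2 * |y₀ - g₀|) ∧
    B ^ 2 - 4 * C < 0 :=
  funk_parabola_stmt8_general y₀ f₀ g₀ σ₁ B C hy₀ hgy hσ hB hC
end

section
/- Canonical form of the type-1 Funk parabola with f₀ = 0: let y₀ ∈ (−1,1) and F = (0,g₀) ∈ B² with g₀ ≠ y₀, put s₁ = sgn(y₀−g₀), σ₁ = 1 + s₁·y₀, C = ((y₀−g₀)² + 2|y₀−g₀|)/σ₁², E = −2|y₀−g₀|/σ₁, and for (x,y) ∈ ℝ² set ȳ = 1 + s₁·y. Then x² + C·ȳ² + E·ȳ = 0 holds if and only if x²/(E²/(4C)) + (ȳ + E/(2C))²/(E²/(4C²)) = 1; in particular the solution set is a Euclidean ellipse with center (0, (g₀ − s₁)/(2 + |y₀−g₀|)). -/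
/-!
With `u = ȳ`, the equation `x² + C u² + E u = 0` is `C (u + E/(2C))² + x² = E²/(4C)` after completing the
square, so for `C > 0` and `E ≠ 0` it is a Euclidean ellipse centred at `u = -E/(2C)`. Writing
`t = |y₀ − g₀| = s₁ (y₀ − g₀)` and using `s₁² = 1`, one finds `C = (t² + 2t)/σ₁² > 0`, `E = -2t/σ₁ < 0`
and `E/(2C) = -σ₁/(t + 2)`, from which the centre `y = s₁ (-E/(2C) - 1)` is read off.
-/

theorem sq_add_mul_sq_add_mul_eq_zero_iff (C E x u : ℝ) (hC : C ≠ 0) (hE : E ≠ 0) :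
    x ^ 2 + C * u ^ 2 + E * u = 0 ↔
      x ^ 2 / (E ^ 2 / (4 * C)) + (u + E / (2 * C)) ^ 2 / (E ^ 2 / (4 * C ^ 2)) = 1 := by
  have completed_square :
      x ^ 2 / (E ^ 2 / (4 * C)) + (u + E / (2 * C)) ^ 2 / (E ^ 2 / (4 * C ^ 2)) - 1 =
        4 * C / E ^ 2 * (x ^ 2 + C * u ^ 2 + E * u) := by
    field_simp
    ring
  rw [← sub_eq_zero (b := (1 : ℝ)), completed_square, mul_eq_zero_iff_left (by positivity)]

namespace Real

theorem abs_eq_sign_mul (r : ℝ) : |r| = sign r * r := by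
  rcases lt_trichotomy r 0 with h | rfl | h
  · rw [abs_of_neg h, sign_of_neg h, neg_one_mul]
  · simp
  · rw [abs_of_pos h, sign_of_pos h, one_mul]

theorem sign_sq_of_ne_zero {r : ℝ} (hr : r ≠ 0) : sign r ^ 2 = 1 := by
  rcases sign_apply_eq_of_ne_zero r hr with h | h <;> simp [h]

theorem abs_sign_le_one (r : ℝ) : |sign r| ≤ 1 := by
  rcases sign_apply_eq r with h | h | h <;> simp [h]

theorem one_add_sign_mul_pos (r : ℝ) {y : ℝ} (hy : |y| < 1) : 0 < 1 + sign r * y := by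
  have h : |sign r * y| < 1 := by
    rw [abs_mul]
    exact (mul_le_of_le_one_left (abs_nonneg y) (abs_sign_le_one r)).trans_lt hy
  linarith [(abs_lt.mp h).1]

end Real

theorem funk_parabola_stmt9_general (y₀ g₀ s₁ σ₁ C E : ℝ)
    (hy₀ : -1 < y₀ ∧ y₀ < 1) (hgy : g₀ ≠ y₀)
    (hs : s₁ = Real.sign (y₀ - g₀)) (hσ : σ₁ = 1 + s₁ * y₀)
    (hC : C = ((y₀ - g₀) ^ 2 + 2 * |y₀ - g₀|) / σ₁ ^ 2)
    (hE : E = -2 * |y₀ - g₀| / σ₁) :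
    (∀ x y : ℝ, x ^ 2 + C * (1 + s₁ * y) ^ 2 + E * (1 + s₁ * y) = 0 ↔
        x ^ 2 / (E ^ 2 / (4 * C)) +
          ((1 + s₁ * y) + E / (2 * C)) ^ 2 / (E ^ 2 / (4 * C ^ 2)) = 1) ∧
    s₁ * (-(E / (2 * C)) - 1) = (g₀ - s₁) / (2 + |y₀ - g₀|) := by
  have hd : y₀ - g₀ ≠ 0 := sub_ne_zero.mpr hgy.symm
  have ht : 0 < |y₀ - g₀| := abs_pos.mpr hd
  have hs₁ : s₁ ^ 2 = 1 := hs ▸ Real.sign_sq_of_ne_zero hd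
  have habs : |y₀ - g₀| = s₁ * (y₀ - g₀) := hs ▸ Real.abs_eq_sign_mul _
  have hσ₁ : 0 < σ₁ := hσ ▸ hs ▸ Real.one_add_sign_mul_pos _ (abs_lt.mpr hy₀)
  rw [← sq_abs (y₀ - g₀)] at hC
  have hC₀ : C ≠ 0 := by rw [hC]; positivity
  have hE₀ : E ≠ 0 := by rw [hE]; exact div_ne_zero (by linarith) hσ₁.ne'
  refine ⟨fun x y => sq_add_mul_sq_add_mul_eq_zero_iff C E x _ hC₀ hE₀, ?_⟩
  have hratio : E / (2 * C) = -σ₁ / (|y₀ - g₀| + 2) := by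
    rw [hE, hC]
    field_simp
  rw [hratio]
  field_simp
  linear_combination (2 + |y₀ - g₀|) * s₁ * hσ - (2 + |y₀ - g₀|) * s₁ * habs +
    (2 + |y₀ - g₀|) * g₀ * hs₁

/-- Canonical form of the type-1 Funk parabola with `f₀ = 0`:
`x² + Cȳ² + Eȳ = 0` iff `x²/(E²/(4C)) + (ȳ + E/(2C))²/(E²/(4C²)) = 1`,
an ellipse whose center has `y`-coordinate `(g₀ − s₁)/(2 + |y₀−g₀|)` (and `x`-coordinate 0). -/
theorem funk_parabola_stmt9 (y₀ g₀ s₁ σ₁ C E : ℝ)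
    (hy₀ : -1 < y₀ ∧ y₀ < 1) (hF : ‖pt (0 : ℝ) g₀‖ < 1) (hgy : g₀ ≠ y₀)
    (hs : s₁ = Real.sign (y₀ - g₀)) (hσ : σ₁ = 1 + s₁ * y₀)
    (hC : C = ((y₀ - g₀) ^ 2 + 2 * |y₀ - g₀|) / σ₁ ^ 2)
    (hE : E = -2 * |y₀ - g₀| / σ₁) :
    (∀ x y : ℝ, x ^ 2 + C * (1 + s₁ * y) ^ 2 + E * (1 + s₁ * y) = 0 ↔
        x ^ 2 / (E ^ 2 / (4 * C)) +
          ((1 + s₁ * y) + E / (2 * C)) ^ 2 / (E ^ 2 / (4 * C ^ 2)) = 1) ∧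
    s₁ * (-(E / (2 * C)) - 1) = (g₀ - s₁) / (2 + |y₀ - g₀|) :=
  funk_parabola_stmt9_general y₀ g₀ s₁ σ₁ C E hy₀ hgy hs hσ hC hE
end

section
/- Nonemptiness of the Funk parabola of type 2: let y₀ ∈ (−1,1) and F = (f₀,g₀) ∈ B² with g₀ ≠ y₀, and let Q* = (f₀/ρ(g₀,y₀), y₀) be the point of the line s: y = y₀ realizing the Funk distance from F to s. Then there exists t₀ ∈ (0,1) such that the point P = F + t₀·(Q* − F) ∈ B² satisfies d_F(P,F) = d_F(P,Q*). -/
/-!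
On the line through `F` with direction `v`, the radicand of the Funk distance between two of its
points `F + t • v`, `F + u • v` is `(u - t)² D` with `D = ⟪F, v⟫² + (1 - ‖F‖²) ‖v‖²` independent of
`t` and `u`. So `d_F(P, F)` and `d_F(P, Q)` for `P = F + t • (Q - F)` are logarithms of ratios of
affine functions of `t`, and equidistance becomes a linear equation in `t` whose root lies in
`(0, 1)` because `F` and `Q` lie in the disk. For the foot `Q* = (f₀ / ρ, y₀)`, with
`σ = sgn(g₀ - y₀)` and `ρ = (1 + σ g₀) / (1 + σ y₀)`, the bound `f₀² < (1 - σ g₀)(1 + σ g₀)`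
rescales to `(f₀ / ρ)² < (1 - σ y₀)(1 + σ y₀)` since `σ (g₀ - y₀) ≥ 0`, so `Q*` lies in the disk.
-/

open Real RealInnerProductSpace

section FunkDisc

variable {E : Type*} [NormedAddCommGroup E] [InnerProductSpace ℝ E]

def funkDisc (P v : E) : ℝ := ⟪P, v⟫ ^ 2 + (1 - ‖P‖ ^ 2) * ‖v‖ ^ 2

lemma funkDisc_smul_right (P v : E) (c : ℝ) : funkDisc P (c • v) = c ^ 2 * funkDisc P v := by
  rw [funkDisc, funkDisc, real_inner_smul_right, norm_smul, Real.norm_eq_abs, mul_pow, mul_pow,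
    sq_abs]
  ring

lemma funkDisc_add_smul_left (P v : E) (t : ℝ) : funkDisc (P + t • v) v = funkDisc P v := by
  rw [funkDisc, funkDisc, inner_add_left, real_inner_smul_left, real_inner_self_eq_norm_sq,
    norm_add_sq_real, real_inner_smul_right, norm_smul, Real.norm_eq_abs, mul_pow, sq_abs]
  ring

lemma sq_inner_lt_funkDisc {P v : E} (hP : ‖P‖ < 1) (hv : v ≠ 0) : ⟪P, v⟫ ^ 2 < funkDisc P v := by
  have hP' : 0 < 1 - ‖P‖ ^ 2 := by nlinarith [norm_nonneg P]
  exact lt_add_of_pos_right _ (mul_pos hP' (pow_pos (norm_pos_iff.mpr hv) 2))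

end FunkDisc

section FunkDist

variable {n : ℕ}

lemma funkDist_eq_log_funkDisc (P Q : EuclideanSpace ℝ (Fin n)) :
    funkDist P Q =
      log ((√(funkDisc P (Q - P)) - ⟪P, Q - P⟫) / (√(funkDisc P (Q - P)) - ⟪Q, Q - P⟫)) :=
  rfl

lemma funkDist_add_smul_add_smul (F v : EuclideanSpace ℝ (Fin n)) (t u : ℝ) :
    funkDist (F + t • v) (F + u • v) =
      log ((|u - t| * √(funkDisc F v) - (u - t) * (⟪F, v⟫ + t * ‖v‖ ^ 2)) /
        (|u - t| * √(funkDisc F v) - (u - t) * (⟪F, v⟫ + u * ‖v‖ ^ 2))) := by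
  have hsub : F + u • v - (F + t • v) = (u - t) • v := by module
  have hinner (c : ℝ) : ⟪F + c • v, v⟫ = ⟪F, v⟫ + c * ‖v‖ ^ 2 := by
    rw [inner_add_left, real_inner_smul_left, real_inner_self_eq_norm_sq]
  rw [funkDist_eq_log_funkDisc, hsub, funkDisc_smul_right, funkDisc_add_smul_left,
    Real.sqrt_mul (sq_nonneg _), Real.sqrt_sq_eq_abs, real_inner_smul_right, real_inner_smul_right,
    hinner, hinner]

lemma funkDist_add_smul_add_smul_of_lt (F v : EuclideanSpace ℝ (Fin n)) {t u : ℝ} (htu : t < u) :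
    funkDist (F + t • v) (F + u • v) =
      log ((√(funkDisc F v) - (⟪F, v⟫ + t * ‖v‖ ^ 2)) /
        (√(funkDisc F v) - (⟪F, v⟫ + u * ‖v‖ ^ 2))) := by
  rw [funkDist_add_smul_add_smul, abs_of_pos (sub_pos.mpr htu), ← mul_sub, ← mul_sub,
    mul_div_mul_left _ _ (sub_pos.mpr htu).ne']

lemma funkDist_add_smul_add_smul_of_gt (F v : EuclideanSpace ℝ (Fin n)) {t u : ℝ} (hut : u < t) :
    funkDist (F + t • v) (F + u • v) =
      log ((√(funkDisc F v) + (⟪F, v⟫ + t * ‖v‖ ^ 2)) /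
        (√(funkDisc F v) + (⟪F, v⟫ + u * ‖v‖ ^ 2))) := by
  have hfactor (x y : ℝ) : -(u - t) * x - (u - t) * y = (t - u) * (x + y) := by ring
  rw [funkDist_add_smul_add_smul, abs_of_neg (sub_neg.mpr hut), hfactor, hfactor,
    mul_div_mul_left _ _ (sub_pos.mpr hut).ne']

end FunkDist

lemma exists_add_div_eq_sub_div {s a L : ℝ} (ha : |a| < s) (haL : |a + L| < s) :
    ∃ t, 0 < t ∧ t < 1 ∧ (s + (a + t * L)) / (s + a) = (s - (a + t * L)) / (s - (a + L)) := by
  obtain ⟨ha₁, ha₂⟩ := abs_lt.mp ha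
  obtain ⟨haL₁, haL₂⟩ := abs_lt.mp haL
  have hden : 0 < 2 * s - L := by linarith
  -- after clearing denominators the equation is linear in `t`: `t * (2 * s - L) = s + a`
  refine ⟨(s + a) / (2 * s - L), div_pos (by linarith) hden,
    (div_lt_one hden).mpr (by linarith), ?_⟩
  rw [div_eq_div_iff (by linarith) (by linarith)]
  linear_combination L * div_mul_cancel₀ (s + a) hden.ne'

theorem exists_funkDist_eq_of_norm_lt_one {n : ℕ} {F Q : EuclideanSpace ℝ (Fin n)}
    (hF : ‖F‖ < 1) (hQ : ‖Q‖ < 1) (hne : Q ≠ F) :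
    ∃ t₀ : ℝ, 0 < t₀ ∧ t₀ < 1 ∧ ‖F + t₀ • (Q - F)‖ < 1 ∧
      funkDist (F + t₀ • (Q - F)) F = funkDist (F + t₀ • (Q - F)) Q := by
  set v := Q - F
  have hv : v ≠ 0 := sub_ne_zero.mpr hne
  have hQv : Q = F + (1 : ℝ) • v := by rw [one_smul, add_sub_cancel]
  have hs := Real.sqrt_nonneg (funkDisc F v)
  have hs_sq := Real.sq_sqrt (sq_nonneg ⟪F, v⟫ |>.trans (sq_inner_lt_funkDisc hF hv).le)
  have ha : |⟪F, v⟫| < √(funkDisc F v) :=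
    abs_lt_of_sq_lt_sq (by rw [hs_sq]; exact sq_inner_lt_funkDisc hF hv) hs
  have haL : |⟪F, v⟫ + ‖v‖ ^ 2| < √(funkDisc F v) := by
    refine abs_lt_of_sq_lt_sq ?_ hs
    have := sq_inner_lt_funkDisc (hQv ▸ hQ) hv
    rwa [funkDisc_add_smul_left, inner_add_left, real_inner_smul_left, real_inner_self_eq_norm_sq,
      one_mul, ← hs_sq] at this
  obtain ⟨t₀, ht₀, ht₁, heq⟩ := exists_add_div_eq_sub_div ha haL
  refine ⟨t₀, ht₀, ht₁, ?_, ?_⟩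
  · simpa using (convex_ball (0 : EuclideanSpace ℝ (Fin n)) 1).add_smul_sub_mem
      (by simpa using hF) (by simpa using hQ) ⟨ht₀.le, ht₁.le⟩
  · have hdF := funkDist_add_smul_add_smul_of_gt F v ht₀
    have hdQ := funkDist_add_smul_add_smul_of_lt F v ht₁
    rw [zero_smul, add_zero] at hdF
    rw [← hQv] at hdQ
    rw [hdF, hdQ, zero_mul, add_zero, one_mul, heq]

lemma norm_pt_lt_one_iff {a b : ℝ} : ‖pt a b‖ < 1 ↔ a ^ 2 + b ^ 2 < 1 := by
  rw [← sq_lt_one_iff₀ (norm_nonneg _), pt, EuclideanSpace.norm_eq, Real.sq_sqrt (by positivity)]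
  simp [Fin.sum_univ_two, sq_abs]

lemma sq_div_add_sq_lt_one {σ f g y : ℝ} (hσ : σ ^ 2 = 1) (hgy : 0 ≤ σ * (g - y))
    (hy : y ^ 2 < 1) (hfg : f ^ 2 + g ^ 2 < 1) :
    (f / ((1 + σ * g) / (1 + σ * y))) ^ 2 + y ^ 2 < 1 := by
  have hσg : 0 < 1 + σ * g := by nlinarith [sq_nonneg f, sq_nonneg (σ * g - 1)]
  have hσy : 0 < 1 + σ * y := by nlinarith [sq_nonneg (σ * y - 1)]
  rw [div_div_eq_mul_div, div_pow, ← lt_sub_iff_add_lt, div_lt_iff₀ (by positivity)]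
  have hf : f ^ 2 < (1 - σ * g) * (1 + σ * g) := by linear_combination hfg + g ^ 2 * hσ
  have hshift : (1 - σ * g) * (1 + σ * g) * (1 + σ * y) ≤ (1 - σ * y) * (1 + σ * g) ^ 2 := by
    nlinarith [mul_nonneg hσg.le hgy]
  have hy_factor : 1 - y ^ 2 = (1 - σ * y) * (1 + σ * y) := by linear_combination y ^ 2 * hσ
  rw [hy_factor]
  nlinarith [mul_lt_mul_of_pos_right ((mul_lt_mul_of_pos_right hf hσy).trans_le hshift) hσy]

lemma sq_div_rho_add_sq_lt_one {f g y : ℝ} (hy : y ^ 2 < 1) (hfg : f ^ 2 + g ^ 2 < 1) :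
    (f / rho g y) ^ 2 + y ^ 2 < 1 := by
  rcases eq_or_ne g y with rfl | hgy
  · simpa [rho] using hfg
  · refine sq_div_add_sq_lt_one ?_ (Real.sign_mul_nonneg _) hy hfg
    rcases Real.sign_apply_eq_of_ne_zero _ (sub_ne_zero.mpr hgy) with hσ | hσ <;>
      rw [hσ] <;> norm_num

/-- Nonemptiness of the type-2 Funk parabola: with `Q* = (f₀/ρ(g₀,y₀), y₀)` the point of
the directrix realizing `d_F(F,s)`, some point `P = F + t₀(Q*−F)`, `t₀ ∈ (0,1)`, of the
open segment from `F` to `Q*` satisfies `d_F(P,F) = d_F(P,Q*)`. -/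
theorem funk_parabola_stmt12 (y₀ f₀ g₀ : ℝ)
    (hy₀ : -1 < y₀ ∧ y₀ < 1) (hF : ‖pt f₀ g₀‖ < 1) (hgy : g₀ ≠ y₀) :
    ∃ t₀ : ℝ, 0 < t₀ ∧ t₀ < 1 ∧
      ‖pt f₀ g₀ + t₀ • (pt (f₀ / rho g₀ y₀) y₀ - pt f₀ g₀)‖ < 1 ∧
      funkDist (pt f₀ g₀ + t₀ • (pt (f₀ / rho g₀ y₀) y₀ - pt f₀ g₀)) (pt f₀ g₀) =
        funkDist (pt f₀ g₀ + t₀ • (pt (f₀ / rho g₀ y₀) y₀ - pt f₀ g₀))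
          (pt (f₀ / rho g₀ y₀) y₀) := by
  have hy : y₀ ^ 2 < 1 := sq_lt_one_iff_abs_lt_one _ |>.mpr (abs_lt.mpr hy₀)
  have hQ : ‖pt (f₀ / rho g₀ y₀) y₀‖ < 1 :=
    norm_pt_lt_one_iff.mpr (sq_div_rho_add_sq_lt_one hy (norm_pt_lt_one_iff.mp hF))
  have hne : pt (f₀ / rho g₀ y₀) y₀ ≠ pt f₀ g₀ := fun h =>
    hgy (by simpa [pt] using congrArg (· 1) h.symm)
  exact exists_funkDist_eq_of_norm_lt_one hF hQ hne
end
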